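/- For fixed L ≥ 1 and vectors a, b ∈ ℝ_+^L with u = Σ_ℓ a_ℓ, v = Σ_ℓ b_ℓ, define distributions p_n and q_n on {0, 1, ..., L} by p_n(0) = 1 − u log n/n, p_n(ℓ) = a_ℓ log n/n, q_n(0) = 1 − v log n/n, q_n(ℓ) = b_ℓ log n/n for 1 ≤ ℓ ≤ L. Then the Renyi divergence of order 1/2 between p_n and q_n satisfies I = ( Σ_{ℓ=1}^L (√a_ℓ − √b_ℓ)² ) · (log n / n) + O( log² n / n² ) as n → ∞. -/
import Mathlib

set_option maxHeartbeats 1000000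


/-!
STATEMENT 13: For the discrete colored model distributions
`p_n(0) = 1 − u log n / n`, `p_n(ℓ) = a_ℓ log n / n`,
`q_n(0) = 1 − v log n / n`, `q_n(ℓ) = b_ℓ log n / n` (`1 ≤ ℓ ≤ L`,
`u = ∑ a_ℓ`, `v = ∑ b_ℓ`), the order-1/2 Renyi divergence
`I(n) = −2 log ∑_{ℓ=0}^L √(p_n(ℓ) q_n(ℓ))` satisfies
`I(n) = (∑_ℓ (√a_ℓ − √b_ℓ)²) log n / n + O(log² n / n²)` as `n → ∞`.
-/

open Filter Asymptotics

namespace Renyi13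

/-- The mass function on the color alphabet `{0, …, L}` with parameter vector `c`. -/
noncomputable def mass (L : ℕ) (c : Fin L → ℝ) (n : ℕ) : Fin (L + 1) → ℝ :=
  Fin.cases (1 - (∑ j, c j) * Real.log n / n) fun j => c j * Real.log n / n

/-- The order-1/2 Renyi divergence between `p_n` and `q_n`. -/
noncomputable def I (L : ℕ) (a b : Fin L → ℝ) (n : ℕ) : ℝ :=
  -2 * Real.log (∑ ℓ : Fin (L + 1), Real.sqrt (mass L a n ℓ * mass L b n ℓ))

lemma sqrt_one_sub_bound {w : ℝ} (h0 : 0 ≤ w) (h1 : w ≤ 1) :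
    |Real.sqrt (1 - w) - (1 - w / 2)| ≤ w ^ 2 / 2 := by
  have hs : Real.sqrt (1 - w) ^ 2 = 1 - w := Real.sq_sqrt (by linarith)
  have hnn : 0 ≤ Real.sqrt (1 - w) := Real.sqrt_nonneg _
  rw [abs_le]
  constructor
  · nlinarith [sq_nonneg (Real.sqrt (1 - w) + (1 - w / 2 - w ^ 2 / 2)), sq_nonneg w]
  · nlinarith [sq_nonneg (Real.sqrt (1 - w) - (1 - w / 2)),
      sq_nonneg (Real.sqrt (1 - w) + (1 - w / 2))]

lemma log_bound {t : ℝ} (h : |t| ≤ 1 / 2) : |Real.log (1 + t) - t| ≤ 2 * t ^ 2 := by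
  have h1 : |(-t)| < 1 := by rw [abs_neg]; linarith [abs_nonneg t]
  have h2 := Real.abs_log_sub_add_sum_range_le h1 1
  simp [Finset.sum_range_succ] at h2
  rw [show -t + Real.log (1 + t) = Real.log (1 + t) - t from by ring] at h2
  have h6 : t ^ 2 / (1 - |t|) ≤ 2 * t ^ 2 := by
    rw [div_le_iff₀ (by linarith)]
    nlinarith [sq_nonneg t]
  linarith

lemma aux_w0 {u v x : ℝ} (hu : 0 ≤ u) (hv : 0 ≤ v) (hx0 : 0 ≤ x)
    (hhalf : (u + v) * x ≤ 1 / 2) : 0 ≤ (u + v) * x - u * v * x ^ 2 := by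
  nlinarith [sq_nonneg ((u - v) * x), mul_nonneg (add_nonneg hu hv) hx0,
    mul_le_mul_of_nonneg_left hhalf (mul_nonneg (add_nonneg hu hv) hx0)]

lemma aux_w2 {y w : ℝ} (h0 : 0 ≤ w) (hub : w ≤ y) : w ^ 2 ≤ y ^ 2 := by
  nlinarith [mul_self_le_mul_self h0 hub]

lemma aux_xx {x : ℝ} (h0 : 0 ≤ x) (h1 : x ≤ 1 / 2) : x ^ 2 ≤ x := by nlinarith

theorem statement13 (L : ℕ) (hL : 1 ≤ L) (a b : Fin L → ℝ)
    (ha : ∀ ℓ, 0 ≤ a ℓ) (hb : ∀ ℓ, 0 ≤ b ℓ) :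
    (fun n : ℕ => I L a b n -
        (∑ ℓ, (Real.sqrt (a ℓ) - Real.sqrt (b ℓ)) ^ 2) * Real.log n / n)
      =O[atTop] fun n : ℕ => (Real.log n) ^ 2 / (n : ℝ) ^ 2 := by
  obtain ⟨u, hu_def⟩ : ∃ u : ℝ, u = ∑ j, a j := ⟨_, rfl⟩
  obtain ⟨v, hv_def⟩ : ∃ v : ℝ, v = ∑ j, b j := ⟨_, rfl⟩
  obtain ⟨c, hc_def⟩ : ∃ c : ℝ, c = ∑ j, Real.sqrt (a j * b j) := ⟨_, rfl⟩
  obtain ⟨K, hK_def⟩ : ∃ K : ℝ, K = ∑ ℓ, (Real.sqrt (a ℓ) - Real.sqrt (b ℓ)) ^ 2 := ⟨_, rfl⟩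
  rw [← hK_def]
  have hu : 0 ≤ u := hu_def ▸ Finset.sum_nonneg fun j _ => ha j
  have hv : 0 ≤ v := hv_def ▸ Finset.sum_nonneg fun j _ => hb j
  have hc : 0 ≤ c := hc_def ▸ Finset.sum_nonneg fun j _ => Real.sqrt_nonneg _
  have hK : 0 ≤ K := hK_def ▸ Finset.sum_nonneg fun j _ => sq_nonneg _
  have hKuv : K = u + v - 2 * c := by
    rw [hK_def, hu_def, hv_def, hc_def, ← Finset.sum_add_distrib, Finset.mul_sum,
      ← Finset.sum_sub_distrib]
    apply Finset.sum_congr rfl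
    intro j _
    rw [sub_sq, Real.sq_sqrt (ha j), Real.sq_sqrt (hb j), Real.sqrt_mul (ha j)]
    ring
  obtain ⟨C₁, hC₁_def⟩ : ∃ C₁ : ℝ, C₁ = (u + v) ^ 2 + u * v := ⟨_, rfl⟩
  have hC₁ : 0 ≤ C₁ := by rw [hC₁_def]; positivity
  obtain ⟨M, hM_def⟩ : ∃ M : ℝ, M = K / 2 + C₁ := ⟨_, rfl⟩
  have hM : 0 ≤ M := by rw [hM_def]; positivity
  obtain ⟨C, hC_def⟩ : ∃ C : ℝ, C = 4 * M ^ 2 + 2 * C₁ := ⟨_, rfl⟩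
  obtain ⟨D, hD_def⟩ : ∃ D : ℝ, D = 1 + (u + v) + M := ⟨_, rfl⟩
  have hD : 1 ≤ D := by rw [hD_def]; linarith
  have hDpos : 0 < D := by linarith
  have key : ∀ n : ℕ, 1 ≤ n → Real.log n / n ≤ 1 / (2 * D) →
      |I L a b n - K * Real.log n / n| ≤ C * ((Real.log n) ^ 2 / (n : ℝ) ^ 2) := by
    intro n hn hxle
    obtain ⟨x, hx_def⟩ : ∃ x : ℝ, x = Real.log n / n := ⟨_, rfl⟩
    rw [← hx_def] at hxle
    have hx0 : 0 ≤ x := by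
      rw [hx_def]
      exact div_nonneg (Real.log_nonneg (by exact_mod_cast hn)) (by positivity)
    have hxD : x * (2 * D) ≤ 1 := by
      rw [← le_div_iff₀ (by linarith)]; exact hxle
    have hDx : x * D = x + x * (u + v) + x * M := by rw [hD_def]; ring
    have hxu : 0 ≤ x * u := mul_nonneg hx0 hu
    have hxv : 0 ≤ x * v := mul_nonneg hx0 hv
    have hxM : 0 ≤ x * M := mul_nonneg hx0 hM
    have hhalf : (u + v) * x ≤ 1 / 2 := by linarith [hxD, hDx, hxu, hxv, hxM, hx0]
    have hx1 : x ≤ 1 / 2 := by linarith [hxD, hDx, hxu, hxv, hxM]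
    have hMx : M * x ≤ 1 / 2 := by linarith [hxD, hDx, hxu, hxv, hx0]
    -- sum identity
    have hsum : ∑ ℓ : Fin (L + 1), Real.sqrt (mass L a n ℓ * mass L b n ℓ)
        = Real.sqrt ((1 - u * x) * (1 - v * x)) + c * x := by
      rw [hu_def, hv_def, hc_def, hx_def, Fin.sum_univ_succ]
      congr 1
      · simp only [mass, Fin.cases_zero]
        rw [mul_div_assoc, mul_div_assoc]
      · rw [Finset.sum_mul]
        apply Finset.sum_congr rfl
        intro j _
        simp only [mass, Fin.cases_succ]
        rw [show a j * Real.log n / n * (b j * Real.log n / n)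
            = a j * b j * (Real.log n / n) ^ 2 from by ring,
          Real.sqrt_mul (mul_nonneg (ha j) (hb j)),
          Real.sqrt_sq (hx_def ▸ hx0)]
    obtain ⟨w, hw_def⟩ : ∃ w : ℝ, w = (u + v) * x - u * v * x ^ 2 := ⟨_, rfl⟩
    have hwub : w ≤ (u + v) * x := by
      rw [hw_def]
      linarith [mul_nonneg (mul_nonneg hu hv) (sq_nonneg x)]
    have hw0 : 0 ≤ w := by
      rw [hw_def]; exact aux_w0 hu hv hx0 hhalf
    have hw1 : w ≤ 1 := by linarith
    have hprod : (1 - u * x) * (1 - v * x) = 1 - w := by rw [hw_def]; ring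
    have h1 := sqrt_one_sub_bound hw0 hw1
    have hw2 : w ^ 2 ≤ ((u + v) * x) ^ 2 := aux_w2 hw0 hwub
    have hA : |Real.sqrt ((1 - u * x) * (1 - v * x)) - (1 - (u + v) * x / 2)| ≤ C₁ * x ^ 2 := by
      rw [hprod]
      have h1' := abs_le.mp h1
      have hC₁x : C₁ * x ^ 2 = (u + v) ^ 2 * x ^ 2 + u * v * x ^ 2 := by rw [hC₁_def]; ring
      rw [abs_le]
      have huvx : 0 ≤ u * v * x ^ 2 := mul_nonneg (mul_nonneg hu hv) (sq_nonneg x)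
      constructor
      · linarith [h1'.1, h1'.2, hw2, hC₁x, huvx, hw_def]
      · linarith [h1'.1, h1'.2, hw2, hC₁x, huvx, hw_def]
    obtain ⟨t, ht_def⟩ : ∃ t : ℝ, t = Real.sqrt ((1 - u * x) * (1 - v * x)) + c * x - 1 :=
      ⟨_, rfl⟩
    have ht1 : |t + K * x / 2| ≤ C₁ * x ^ 2 := by
      rw [show t + K * x / 2
          = Real.sqrt ((1 - u * x) * (1 - v * x)) - (1 - (u + v) * x / 2) from by
        rw [ht_def, hKuv]; ring]
      exact hA
    have ht1' := abs_le.mp ht1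
    have hKx : 0 ≤ K * x := mul_nonneg hK hx0
    have hxx : x ^ 2 ≤ x := aux_xx hx0 hx1
    have hC₁xx : C₁ * x ^ 2 ≤ C₁ * x := mul_le_mul_of_nonneg_left hxx hC₁
    have htb : |t| ≤ M * x := by
      rw [abs_le, hM_def]
      constructor
      · linarith [ht1'.1, hC₁xx, hKx, mul_nonneg hC₁ hx0]
      · linarith [ht1'.2, hC₁xx, hKx]
    have htb' := abs_le.mp htb
    have ht2 : |t| ≤ 1 / 2 := le_trans htb hMx
    have hlog := log_bound ht2
    have hlog' := abs_le.mp hlog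
    have ht2' : t ^ 2 ≤ M ^ 2 * x ^ 2 := by
      rw [show M ^ 2 * x ^ 2 = (M * x) ^ 2 from by ring]
      exact sq_le_sq' htb'.1 htb'.2
    have hI : I L a b n = -2 * Real.log (1 + t) := by
      rw [I, hsum, show Real.sqrt ((1 - u * x) * (1 - v * x)) + c * x = 1 + t from by
        rw [ht_def]; ring]
    rw [hI, show K * Real.log n / n = K * x from by rw [hx_def]; ring,
      show (Real.log n) ^ 2 / (n : ℝ) ^ 2 = x ^ 2 from by rw [hx_def, div_pow]]
    have hCx : C * x ^ 2 = 4 * (M ^ 2 * x ^ 2) + 2 * (C₁ * x ^ 2) := by rw [hC_def]; ring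
    rw [abs_le]
    constructor
    · linarith [hlog'.1, hlog'.2, ht1'.1, ht1'.2, ht2', hCx]
    · linarith [hlog'.1, hlog'.2, ht1'.1, ht1'.2, ht2', hCx]
  rw [isBigO_iff]
  refine ⟨C, ?_⟩
  have htend : Tendsto (fun n : ℕ => Real.log n / n) atTop (nhds 0) :=
    (Real.isLittleO_log_id_atTop.tendsto_div_nhds_zero).comp tendsto_natCast_atTop_atTop
  have hev : ∀ᶠ n : ℕ in atTop, Real.log n / n < 1 / (2 * D) :=
    htend.eventually (gt_mem_nhds (by positivity))
  filter_upwards [eventually_ge_atTop 1, hev] with n hn hx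
  rw [Real.norm_eq_abs, Real.norm_eq_abs, abs_of_nonneg (by positivity :
    (0:ℝ) ≤ (Real.log n) ^ 2 / (n : ℝ) ^ 2)]
  exact key n hn (le_of_lt hx)


end Renyi13
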